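/- Let (Ω, 𝓕, ν) be a probability space and let Θ = [-1,1]^M be equipped with its Borel σ-algebra 𝓔 and the uniform probability measure λ(dθ) = 2^{-M} dθ. Let (f_n)_{n∈ℕ} be functions f_n : Θ × Ω → ℝ such that there exists f ∈ L²(Θ, 𝓔, λ) with Var_λ(f) > 0 and for ν-almost all ω: f_n(θ, ω) → f(θ) for all θ ∈ Θ, each f_n(·, ω) is 𝓔-measurable, and there exists φ_ω ∈ L²(Θ, 𝓔, λ) with |f_n(θ, ω)| ≤ φ_ω(θ) for all θ and all n. Then for each j ∈ {1, …, M}, the total Sobol' indices satisfy T_j(f_n(·, ω)) → T_j(f) as n → ∞, for ν-almost all ω ∈ Ω. -/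

import Mathlib

open MeasureTheory ProbabilityTheory Filter

/-- The uniform probability measure `λ(dθ) = 2^{-M} dθ` on `Θ = [-1,1]^M`. -/
noncomputable def uniformCube (M : ℕ) : Measure (Fin M → ℝ) :=
  Measure.pi fun _ => (2 : ENNReal)⁻¹ • volume.restrict (Set.Icc (-1 : ℝ) 1)

/-- The sub-σ-algebra of the (Borel) product σ-algebra of `Θ = [-1,1]^M`
generated by the coordinate projections `θ ↦ θ j` for `j ∈ W`. -/
def coordSigmaAlgebra (M : ℕ) (W : Finset (Fin M)) : MeasurableSpace (Fin M → ℝ) :=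
  ⨆ j ∈ W, MeasurableSpace.comap (fun θ : Fin M → ℝ => θ j) inferInstance

/-- The "closed" variance of a group of variables: `Var_λ(E_λ[g | θ_W])`. -/
noncomputable def closedVariance (M : ℕ) (g : (Fin M → ℝ) → ℝ)
    (W : Finset (Fin M)) : ℝ :=
  variance ((uniformCube M)[g|coordSigmaAlgebra M W]) (uniformCube M)

/-- The variance contribution `D_U` of the subset `U` in the ANOVA/Sobol'
decomposition of `g`, obtained from the closed variances by Möbius
inversion: `D_U = ∑_{W ⊆ U} (-1)^{|U|-|W|} Var(E[g | θ_W])`. -/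
noncomputable def anovaVariance (M : ℕ) (g : (Fin M → ℝ) → ℝ)
    (U : Finset (Fin M)) : ℝ :=
  ∑ W ∈ U.powerset, (-1 : ℝ) ^ (U.card - W.card) * closedVariance M g W

/-- The total Sobol' index of the `j`-th coordinate:
`T_j(g) = ∑_{U ∋ j} D_U / Var_λ(g)`, the sum of the Sobol'-decomposition group
indices `S_U(g) = D_U / Var_λ(g)` over all subsets `U ⊆ {1,…,M}` with `j ∈ U`. -/
noncomputable def totalSobolIndex (M : ℕ) (g : (Fin M → ℝ) → ℝ) (j : Fin M) : ℝ :=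
  (∑ U ∈ (Finset.univ : Finset (Fin M)).powerset.filter (fun U => j ∈ U),
      anovaVariance M g U) / variance g (uniformCube M)

/-!
For a.e. `ω` the functions `f_n(·, ω)` converge to `f` in `L²(λ)` by dominated convergence.
Every quantity entering `T_j` is continuous on `L²(λ)`: the variance is `‖F‖² - ⟪1, F⟫²`, and
`E[· | θ_W]` is the orthogonal projection onto a closed subspace. Hence the numerator of `T_j`
converges, and so does the denominator, to `Var_λ(f) ≠ 0`.
-/

open Topology
open scoped RealInnerProductSpace

section Lp

variable {α : Type*} {m m₀ : MeasurableSpace α} {μ : Measure α}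

theorem unifIntegrable_of_norm_le {ι β : Type*} [NormedAddCommGroup β] {p : ENNReal}
    (hp : 1 ≤ p) (hp' : p ≠ ⊤) {f : ι → α → β} {φ : α → ℝ} (hφ : MemLp φ p μ)
    (hle : ∀ i x, ‖f i x‖ ≤ φ x) : UnifIntegrable f p μ := by
  intro ε hε
  obtain ⟨δ, hδ, hφδ⟩ := unifIntegrable_const (ι := ι) hp hp' hφ hε
  refine ⟨δ, hδ, fun i s hs hμs => (eLpNorm_mono fun x => ?_).trans (hφδ i s hs hμs)⟩
  by_cases hx : x ∈ s
  · simpa [Set.indicator_of_mem hx] using (hle i x).trans (le_abs_self _)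
  · simp [Set.indicator_of_notMem hx]

theorem tendsto_toLp_of_dominated [IsFiniteMeasure μ] {β : Type*} [NormedAddCommGroup β]
    {p : ENNReal} [Fact (1 ≤ p)] (hp : p ≠ ⊤) {f : ℕ → α → β} {g : α → β} {φ : α → ℝ}
    (hf : ∀ n, MemLp (f n) p μ) (hg : MemLp g p μ) (hφ : MemLp φ p μ)
    (hle : ∀ n x, ‖f n x‖ ≤ φ x) (hfg : ∀ᵐ x ∂μ, Tendsto (fun n => f n x) atTop (𝓝 (g x))) :
    Tendsto (fun n => (hf n).toLp (f n)) atTop (𝓝 (hg.toLp g)) :=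
  (Lp.tendsto_Lp_iff_tendsto_eLpNorm'' f hf g hg).2 <|
    tendsto_Lp_finite_of_tendsto_ae Fact.out hp (fun n => (hf n).aestronglyMeasurable) hg
      (unifIntegrable_of_norm_le Fact.out hp hφ hle) hfg

theorem variance_Lp_eq [IsProbabilityMeasure μ] (F : Lp ℝ 2 μ) :
    variance F μ = ⟪F, F⟫ - ⟪Lp.const 2 μ (1 : ℝ), F⟫ ^ 2 := by
  have hsq : ⟪F, F⟫ = ∫ x, (F ^ 2 : α → ℝ) x ∂μ :=
    integral_congr_ae (.of_forall fun x => by simp [sq])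
  have hmean : ⟪Lp.const 2 μ (1 : ℝ), F⟫ = ∫ x, F x ∂μ :=
    integral_congr_ae (.of_forall fun x => by simp)
  rw [variance_eq_sub (Lp.memLp F), hsq, hmean]

theorem continuous_variance_Lp [IsProbabilityMeasure μ] :
    Continuous fun F : Lp ℝ 2 μ => variance F μ := by
  simp only [variance_Lp_eq]
  fun_prop

theorem variance_toLp {g : α → ℝ} (hg : MemLp g 2 μ) : variance (hg.toLp g) μ = variance g μ :=
  variance_congr hg.coeFn_toLp

theorem variance_condExpL2 [IsFiniteMeasure μ] (hm : m ≤ m₀) {g : α → ℝ} (hg : MemLp g 2 μ) :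
    variance (condExpL2 ℝ ℝ hm (hg.toLp g) : Lp ℝ 2 μ) μ = variance (μ[g|m]) μ :=
  variance_congr (hg.condExpL2_ae_eq_condExp hm)

theorem tendsto_variance_of_tendsto_toLp [IsProbabilityMeasure μ] {ι : Type*} {l : Filter ι}
    {g : ι → α → ℝ} {g' : α → ℝ} (hg : ∀ i, MemLp (g i) 2 μ) (hg' : MemLp g' 2 μ)
    (h : Tendsto (fun i => (hg i).toLp (g i)) l (𝓝 (hg'.toLp g'))) :
    Tendsto (fun i => variance (g i) μ) l (𝓝 (variance g' μ)) := by
  simp only [← variance_toLp (hg _), ← variance_toLp hg']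
  exact (continuous_variance_Lp.tendsto _).comp h

theorem tendsto_variance_condExp_of_tendsto_toLp [IsProbabilityMeasure μ] (hm : m ≤ m₀)
    {ι : Type*} {l : Filter ι} {g : ι → α → ℝ} {g' : α → ℝ} (hg : ∀ i, MemLp (g i) 2 μ)
    (hg' : MemLp g' 2 μ) (h : Tendsto (fun i => (hg i).toLp (g i)) l (𝓝 (hg'.toLp g'))) :
    Tendsto (fun i => variance (μ[g i|m]) μ) l (𝓝 (variance (μ[g'|m]) μ)) := by
  simp only [← variance_condExpL2 hm (hg _), ← variance_condExpL2 hm hg']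
  have hcont : Continuous fun F : Lp ℝ 2 μ => variance (condExpL2 ℝ ℝ hm F : Lp ℝ 2 μ) μ :=
    continuous_variance_Lp.comp (continuous_subtype_val.comp (condExpL2 ℝ ℝ hm).continuous)
  exact (hcont.tendsto _).comp h

end Lp

instance isProbabilityMeasure_uniformCube (M : ℕ) : IsProbabilityMeasure (uniformCube M) := by
  have : IsProbabilityMeasure ((2 : ENNReal)⁻¹ • volume.restrict (Set.Icc (-1 : ℝ) 1)) := by
    constructor
    rw [Measure.smul_apply, Measure.restrict_apply_univ, Real.volume_Icc]
    norm_num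
    exact ENNReal.inv_mul_cancel two_ne_zero ENNReal.ofNat_ne_top
  unfold uniformCube
  infer_instance

theorem coordSigmaAlgebra_le (M : ℕ) (W : Finset (Fin M)) :
    coordSigmaAlgebra M W ≤ MeasurableSpace.pi :=
  iSup₂_le fun j _ => (measurable_pi_apply j).comap_le

theorem tendsto_totalSobolIndex_of_tendsto_toLp {M : ℕ} {g : ℕ → (Fin M → ℝ) → ℝ}
    {g' : (Fin M → ℝ) → ℝ} (hg : ∀ n, MemLp (g n) 2 (uniformCube M))
    (hg' : MemLp g' 2 (uniformCube M))
    (h : Tendsto (fun n => (hg n).toLp (g n)) atTop (𝓝 (hg'.toLp g')))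
    (hvar : variance g' (uniformCube M) ≠ 0) (j : Fin M) :
    Tendsto (fun n => totalSobolIndex M (g n) j) atTop (𝓝 (totalSobolIndex M g' j)) := by
  have hclosed (W : Finset (Fin M)) :
      Tendsto (fun n => closedVariance M (g n) W) atTop (𝓝 (closedVariance M g' W)) :=
    tendsto_variance_condExp_of_tendsto_toLp (coordSigmaAlgebra_le M W) hg hg' h
  exact (tendsto_finsetSum _ fun U _ => tendsto_finsetSum _ fun W _ =>
    (hclosed W).const_mul _).div (tendsto_variance_of_tendsto_toLp hg hg' h) hvar

theorem stochastic_total_sobol_index_tendsto_ae_general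
    {Ω : Type*} [MeasurableSpace Ω] (ν : Measure Ω)
    {M : ℕ} (f : ℕ → (Fin M → ℝ) → Ω → ℝ) (flim : (Fin M → ℝ) → ℝ)
    (hflim : MemLp flim 2 (uniformCube M))
    (hvar : 0 < variance flim (uniformCube M))
    (hconv : ∀ᵐ ω ∂ν, ∀ θ, Tendsto (fun n => f n θ ω) atTop (nhds (flim θ)))
    (hmeas_bdd : ∀ᵐ ω ∂ν, (∀ n, Measurable fun θ => f n θ ω) ∧
      ∃ φ : (Fin M → ℝ) → ℝ, MemLp φ 2 (uniformCube M) ∧ ∀ θ, ∀ n, |f n θ ω| ≤ φ θ) :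
    ∀ j : Fin M, ∀ᵐ ω ∂ν,
      Tendsto (fun n => totalSobolIndex M (fun θ => f n θ ω) j) atTop
        (nhds (totalSobolIndex M flim j)) := by
  intro j
  filter_upwards [hconv, hmeas_bdd] with ω hω ⟨hmeas, φ, hφ, hbd⟩
  have hdom (n : ℕ) (θ : Fin M → ℝ) : ‖f n θ ω‖ ≤ φ θ := (Real.norm_eq_abs _).trans_le (hbd θ n)
  have hmem (n : ℕ) : MemLp (fun θ => f n θ ω) 2 (uniformCube M) :=
    hφ.of_le (hmeas n).aestronglyMeasurable (.of_forall fun θ => (hdom n θ).trans (le_abs_self _))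
  exact tendsto_totalSobolIndex_of_tendsto_toLp hmem hflim
    (tendsto_toLp_of_dominated ENNReal.ofNat_ne_top hmem hflim hφ hdom (.of_forall hω)) hvar.ne' j

/-- Almost sure convergence of stochastic total Sobol' indices: if for ν-a.a.
`ω` the functions `f_n(·, ω)` are measurable, converge pointwise on `Θ` to
`f ∈ L²(Θ, λ)` with `Var_λ(f) > 0`, and are dominated by some `φ_ω ∈ L²(Θ, λ)`,
then for each coordinate `j`, `T_j(f_n(·,ω)) → T_j(f)` ν-almost surely. -/
theorem stochastic_total_sobol_index_tendsto_ae
    {Ω : Type*} [MeasurableSpace Ω] (ν : Measure Ω) [IsProbabilityMeasure ν]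
    {M : ℕ} (f : ℕ → (Fin M → ℝ) → Ω → ℝ) (flim : (Fin M → ℝ) → ℝ)
    (hflim : MemLp flim 2 (uniformCube M))
    (hvar : 0 < variance flim (uniformCube M))
    (hconv : ∀ᵐ ω ∂ν, ∀ θ, Tendsto (fun n => f n θ ω) atTop (nhds (flim θ)))
    (hmeas_bdd : ∀ᵐ ω ∂ν, (∀ n, Measurable fun θ => f n θ ω) ∧
      ∃ φ : (Fin M → ℝ) → ℝ, MemLp φ 2 (uniformCube M) ∧ ∀ θ, ∀ n, |f n θ ω| ≤ φ θ) :
    ∀ j : Fin M, ∀ᵐ ω ∂ν,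
      Tendsto (fun n => totalSobolIndex M (fun θ => f n θ ω) j) atTop
        (nhds (totalSobolIndex M flim j)) :=
  stochastic_total_sobol_index_tendsto_ae_general ν f flim hflim hvar hconv hmeas_bdd
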